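/- Suppose real numbers R ≥ r ≥ 0 with t_δ(R) ≤ β < 1/√(-δ) for δ < 0. Then there exists a constant K' > 0 depending only on δ and β such that |c_δ(R) - c_δ(r)| ≤ K'·(t_δ(R)² - t_δ(r)²). -/

import Mathlib

/-! Since `1 - tanh² = 1 / cosh²`, the difference `tanh² x - tanh² y` equals
`(cosh² x - cosh² y) / (cosh² x cosh² y)`. The bound `tanh x ≤ m < 1` caps `cosh² x` (and hence
`cosh² y`) by `1 / (1 - m²)`, so the denominator is bounded and
`cosh x - cosh y ≤ cosh² x - cosh² y` (as `cosh x + cosh y ≥ 1`) finishes the estimate. -/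

lemma sub_le_sq_mul_inv_sq_sub_inv_sq {a b A : ℝ} (hb : 0 < b) (hba : b ≤ a) (hab : 1 ≤ a + b)
    (haA : a ^ 2 ≤ A) : a - b ≤ A ^ 2 * ((b ^ 2)⁻¹ - (a ^ 2)⁻¹) := by
  have ha : 0 < a := hb.trans_le hba
  have hdiff : (b ^ 2)⁻¹ - (a ^ 2)⁻¹ = (a - b) * (a + b) / (a ^ 2 * b ^ 2) := by
    field_simp
    ring
  have hden : a ^ 2 * b ^ 2 ≤ A ^ 2 := by
    rw [sq A]
    exact mul_le_mul haA ((pow_le_pow_left₀ hb.le hba 2).trans haA) (by positivity)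
      ((sq_nonneg a).trans haA)
  have hnum : 0 ≤ (a - b) * (a + b) := mul_nonneg (sub_nonneg.2 hba) (by linarith)
  calc a - b ≤ (a - b) * (a + b) := le_mul_of_one_le_right (sub_nonneg.2 hba) hab
    _ ≤ A ^ 2 * ((a - b) * (a + b) / (a ^ 2 * b ^ 2)) := by
        rw [mul_div_assoc', le_div_iff₀ (by positivity), mul_comm (A ^ 2)]
        exact mul_le_mul_of_nonneg_left hden hnum
    _ = A ^ 2 * ((b ^ 2)⁻¹ - (a ^ 2)⁻¹) := by rw [hdiff]

namespace Real

lemma one_sub_tanh_sq (x : ℝ) : 1 - tanh x ^ 2 = (cosh x ^ 2)⁻¹ := by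
  rw [tanh_eq_sinh_div_cosh, div_pow, sinh_sq]
  field_simp [(cosh_pos x).ne']
  ring

lemma tanh_nonneg {x : ℝ} (hx : 0 ≤ x) : 0 ≤ tanh x := by
  rw [tanh_eq_sinh_div_cosh]
  exact div_nonneg (sinh_nonneg_iff.2 hx) (cosh_pos x).le

lemma cosh_le_cosh_of_le {x y : ℝ} (hy : 0 ≤ y) (hyx : y ≤ x) : cosh y ≤ cosh x := by
  rwa [cosh_le_cosh, abs_of_nonneg hy, abs_of_nonneg (hy.trans hyx)]

lemma cosh_sq_le_of_tanh_le {x m : ℝ} (hx : 0 ≤ x) (hxm : tanh x ≤ m) (hm : m < 1) :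
    cosh x ^ 2 ≤ (1 - m ^ 2)⁻¹ := by
  have htanh : 0 ≤ tanh x := tanh_nonneg hx
  have hsq : tanh x ^ 2 ≤ m ^ 2 := pow_le_pow_left₀ htanh hxm 2
  have hm2 : 0 < 1 - m ^ 2 := by nlinarith
  rw [le_inv_comm₀ (by positivity) hm2, ← one_sub_tanh_sq]
  linarith

lemma cosh_sub_cosh_le_of_tanh_le {x y m : ℝ} (hy : 0 ≤ y) (hyx : y ≤ x) (hxm : tanh x ≤ m)
    (hm : m < 1) : cosh x - cosh y ≤ ((1 - m ^ 2)⁻¹) ^ 2 * (tanh x ^ 2 - tanh y ^ 2) := by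
  have htanh : tanh x ^ 2 - tanh y ^ 2 = (cosh y ^ 2)⁻¹ - (cosh x ^ 2)⁻¹ := by
    rw [← one_sub_tanh_sq, ← one_sub_tanh_sq]
    ring
  rw [htanh]
  exact sub_le_sq_mul_inv_sq_sub_inv_sq (cosh_pos y) (cosh_le_cosh_of_le hy hyx)
    (by linarith [one_le_cosh x, one_le_cosh y]) (cosh_sq_le_of_tanh_le (hy.trans hyx) hxm hm)

end Real

theorem stmt_13 (δ : ℝ) (hδ : δ < 0) (β : ℝ) (hβ0 : 0 < β)
    (hβ : β < 1 / Real.sqrt (-δ)) :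
    ∃ K : ℝ, 0 < K ∧ ∀ R r : ℝ, 0 ≤ r → r ≤ R →
      Real.tanh (Real.sqrt (-δ) * R) / Real.sqrt (-δ) ≤ β →
      |Real.cosh (Real.sqrt (-δ) * R) - Real.cosh (Real.sqrt (-δ) * r)| ≤
        K * ((Real.tanh (Real.sqrt (-δ) * R) / Real.sqrt (-δ)) ^ 2 -
             (Real.tanh (Real.sqrt (-δ) * r) / Real.sqrt (-δ)) ^ 2) := by
  set s := Real.sqrt (-δ)
  have hs : 0 < s := Real.sqrt_pos.2 (neg_pos.2 hδ)
  have hsβ : s * β < 1 := by rwa [lt_div_iff₀' hs] at hβ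
  have hc : 0 < 1 - (s * β) ^ 2 := by nlinarith [mul_pos hs hβ0]
  refine ⟨((1 - (s * β) ^ 2)⁻¹) ^ 2 * s ^ 2, by positivity, fun R r hr hrR hRβ => ?_⟩
  have hsr : 0 ≤ s * r := mul_nonneg hs.le hr
  have hsrR : s * r ≤ s * R := mul_le_mul_of_nonneg_left hrR hs.le
  have hsR : Real.tanh (s * R) ≤ s * β := (div_le_iff₀' hs).1 hRβ
  rw [abs_of_nonneg (sub_nonneg.2 (Real.cosh_le_cosh_of_le hsr hsrR)), div_pow, div_pow,
    ← sub_div, mul_assoc, mul_div_assoc', mul_div_cancel_left₀ _ (pow_ne_zero 2 hs.ne')]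
  exact Real.cosh_sub_cosh_le_of_tanh_le hsr hsrR hsR hsβ
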